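/- Let V be a finite-dimensional real inner product space, 𝔤 ⊆ 𝔰𝔬(V) a Lie subalgebra acting irreducibly on V, and I : V → V an orthogonal complex structure (I² = -id, Iᵀ = -I) commuting with every element of 𝔤. Let R : Λ²V → Λ²V be a self-adjoint operator satisfying the Bianchi identity with image contained in 𝔤, whose elements all commute with I. Then for all X, Y ∈ V, the complex trace satisfies Tr_ℂ(R(X ∧ IY)) = -i·Ric(X,Y), where 2Tr_ℂ(ω) = Tr(ω) - i·Tr(Iω) and Ric(X,Y) = Σⱼ ⟨R(eⱼ∧Y)X, eⱼ⟩ for an orthonormal basis (eⱼ). -/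

import Mathlib

open scoped RealInnerProductSpace

/-!
Write `ω = R(X, IY)`. Since `ω` is skew, `Tr ω = 0`. In `Tr(Iω) = Σⱼ ⟨eⱼ, Iωeⱼ⟩`, pair symmetry
turns each term into `-⟨R(eⱼ, Ieⱼ)X, IY⟩`, and the Bianchi identity splits it as
`⟨R(Ieⱼ, X)eⱼ, IY⟩ + ⟨R(X, eⱼ)Ieⱼ, IY⟩`. As `R(·,·)` commutes with the isometry `I`, both sums
are Ricci contractions, the first one taken over the orthonormal frame `(Ieⱼ)`; so each equals
`Ric(X, Y)`.
-/

namespace LinearMap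

variable {V : Type*} [NormedAddCommGroup V] [InnerProductSpace ℝ V] [FiniteDimensional ℝ V]
  {ι : Type*} [Fintype ι]

theorem inner_map_left_eq_neg_of_adjoint_eq_neg {A : V →ₗ[ℝ] V} (hA : adjoint A = -A) (u v : V) :
    ⟪A u, v⟫ = -⟪u, A v⟫ := by
  rw [← adjoint_inner_right, hA, neg_apply, inner_neg_right]

theorem trace_eq_zero_of_adjoint_eq_neg {A : V →ₗ[ℝ] V} (hA : adjoint A = -A) :
    trace ℝ V A = 0 := by
  rw [trace_eq_sum_inner A (stdOrthonormalBasis ℝ V)]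
  refine Finset.sum_eq_zero fun i _ => ?_
  have h := inner_map_left_eq_neg_of_adjoint_eq_neg hA (stdOrthonormalBasis ℝ V i)
    (stdOrthonormalBasis ℝ V i)
  rw [real_inner_comm] at h
  linarith

theorem sum_inner_map_apply_eq_trace (b : OrthonormalBasis ι ℝ V) {A : V →ₗ[ℝ] V}
    (hA : A ∘ₗ adjoint A = id) (T : V →ₗ[ℝ] V) :
    ∑ i, ⟪A (b i), T (A (b i))⟫ = trace ℝ V T := by
  calc ∑ i, ⟪A (b i), T (A (b i))⟫ = ∑ i, ⟪b i, (adjoint A ∘ₗ T ∘ₗ A) (b i)⟫ := by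
        simp only [comp_apply, adjoint_inner_right]
    _ = trace ℝ V T := by
        rw [← trace_eq_sum_inner, trace_comp_comm', comp_assoc, hA, comp_id]

end LinearMap

section ComplexStructure

variable {V : Type*} [NormedAddCommGroup V] [InnerProductSpace ℝ V] [FiniteDimensional ℝ V]
  {I : V →ₗ[ℝ] V}

theorem comp_adjoint_eq_id_of_complexStructure (hI2 : I ∘ₗ I = -LinearMap.id)
    (hIskew : LinearMap.adjoint I = -I) : I ∘ₗ LinearMap.adjoint I = LinearMap.id := by
  rw [hIskew, LinearMap.comp_neg, hI2, neg_neg]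

theorem inner_map_map_of_complexStructure (hI2 : I ∘ₗ I = -LinearMap.id)
    (hIskew : LinearMap.adjoint I = -I) (u v : V) : ⟪I u, I v⟫ = ⟪u, v⟫ := by
  rw [LinearMap.inner_map_left_eq_neg_of_adjoint_eq_neg hIskew, ← LinearMap.comp_apply, hI2,
    LinearMap.neg_apply, LinearMap.id_apply, inner_neg_right, neg_neg]

end ComplexStructure

section Curvature

variable {V : Type*} [NormedAddCommGroup V] [InnerProductSpace ℝ V]
  {ι : Type*} [Fintype ι] (R : V →ₗ[ℝ] V →ₗ[ℝ] (V →ₗ[ℝ] V))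

/-- `Ric(X, Y)` is the trace of `u ↦ R(u, Y)X`. -/
noncomputable def ricci (X Y : V) : ℝ :=
  LinearMap.trace ℝ V ((R.flip Y).flip X)

theorem ricci_eq_sum_inner (b : OrthonormalBasis ι ℝ V) (X Y : V) :
    ricci R X Y = ∑ i, ⟪R (b i) Y X, b i⟫ := by
  simp only [ricci, LinearMap.trace_eq_sum_inner _ b, LinearMap.flip_apply, real_inner_comm]

variable {R}

theorem inner_apply_skew_comp_curvature [FiniteDimensional ℝ V]
    (hpair : ∀ X Y Z W : V, ⟪R X Y Z, W⟫ = ⟪R Z W X, Y⟫)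
    (hbianchi : ∀ X Y Z : V, R X Y Z + R Y Z X + R Z X Y = 0)
    {J : V →ₗ[ℝ] V} (hJskew : LinearMap.adjoint J = -J) (X Z v : V) :
    ⟪v, (J ∘ₗ R X Z) v⟫ = ⟪R (J v) X v, Z⟫ + ⟪R X v (J v), Z⟫ := by
  have hsplit : R v (J v) X = -R (J v) X v - R X v (J v) := by
    rw [← sub_eq_zero, ← hbianchi v (J v) X]; abel
  calc ⟪v, (J ∘ₗ R X Z) v⟫ = -⟪R X Z v, J v⟫ := by
        rw [LinearMap.comp_apply, real_inner_comm (J v),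
          LinearMap.inner_map_left_eq_neg_of_adjoint_eq_neg hJskew, neg_neg]
    _ = -⟪R v (J v) X, Z⟫ := by rw [hpair]
    _ = ⟪R (J v) X v, Z⟫ + ⟪R X v (J v), Z⟫ := by
        rw [hsplit, inner_sub_left, inner_neg_left]; ring

theorem sum_inner_curvature_apply_complexStructure [FiniteDimensional ℝ V]
    (b : OrthonormalBasis ι ℝ V) (hpair : ∀ X Y Z W : V, ⟪R X Y Z, W⟫ = ⟪R Z W X, Y⟫)
    {I : V →ₗ[ℝ] V} (hI2 : I ∘ₗ I = -LinearMap.id) (hIskew : LinearMap.adjoint I = -I)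
    (hcomm : ∀ X Y : V, I ∘ₗ R X Y = R X Y ∘ₗ I) (X Y : V) :
    ∑ i, ⟪R X (b i) (I (b i)), I Y⟫ = ricci R X Y := by
  rw [ricci_eq_sum_inner R b]
  refine Finset.sum_congr rfl fun i _ => ?_
  rw [← LinearMap.comp_apply (R X (b i)), ← hcomm, LinearMap.comp_apply,
    inner_map_map_of_complexStructure hI2 hIskew, hpair]

theorem sum_inner_curvature_complexStructure_apply [FiniteDimensional ℝ V]
    (b : OrthonormalBasis ι ℝ V) (hskew : ∀ X Y : V, LinearMap.adjoint (R X Y) = -(R X Y))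
    (hpair : ∀ X Y Z W : V, ⟪R X Y Z, W⟫ = ⟪R Z W X, Y⟫)
    {I : V →ₗ[ℝ] V} (hI2 : I ∘ₗ I = -LinearMap.id) (hIskew : LinearMap.adjoint I = -I)
    (hcomm : ∀ X Y : V, I ∘ₗ R X Y = R X Y ∘ₗ I) (X Y : V) :
    ∑ i, ⟪R (I (b i)) X (b i), I Y⟫ = ricci R X Y := by
  rw [ricci, ← LinearMap.sum_inner_map_apply_eq_trace b
    (comp_adjoint_eq_id_of_complexStructure hI2 hIskew)]
  refine Finset.sum_congr rfl fun i _ => ?_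
  calc ⟪R (I (b i)) X (b i), I Y⟫ = -⟪I (R (I (b i)) X (b i)), Y⟫ := by
        rw [LinearMap.inner_map_left_eq_neg_of_adjoint_eq_neg hIskew, neg_neg]
    _ = -⟪R (I (b i)) Y (I (b i)), X⟫ := by
        rw [← LinearMap.comp_apply I, hcomm, LinearMap.comp_apply, hpair]
    _ = ⟪I (b i), R (I (b i)) Y X⟫ := by
        rw [LinearMap.inner_map_left_eq_neg_of_adjoint_eq_neg (hskew _ _), neg_neg]

theorem trace_complexStructure_comp_curvature [FiniteDimensional ℝ V]
    (hskew : ∀ X Y : V, LinearMap.adjoint (R X Y) = -(R X Y))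
    (hpair : ∀ X Y Z W : V, ⟪R X Y Z, W⟫ = ⟪R Z W X, Y⟫)
    (hbianchi : ∀ X Y Z : V, R X Y Z + R Y Z X + R Z X Y = 0)
    {I : V →ₗ[ℝ] V} (hI2 : I ∘ₗ I = -LinearMap.id) (hIskew : LinearMap.adjoint I = -I)
    (hcomm : ∀ X Y : V, I ∘ₗ R X Y = R X Y ∘ₗ I) (X Y : V) :
    LinearMap.trace ℝ V (I ∘ₗ R X (I Y)) = 2 * ricci R X Y := by
  let b := stdOrthonormalBasis ℝ V
  rw [LinearMap.trace_eq_sum_inner _ b]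
  simp only [inner_apply_skew_comp_curvature hpair hbianchi hIskew, Finset.sum_add_distrib,
    sum_inner_curvature_complexStructure_apply b hskew hpair hI2 hIskew hcomm,
    sum_inner_curvature_apply_complexStructure b hpair hI2 hIskew hcomm]
  ring

end Curvature

theorem complex_trace_of_curvature_equals_ricci
    {V : Type*} [NormedAddCommGroup V] [InnerProductSpace ℝ V] [FiniteDimensional ℝ V]
    {n : ℕ} (e : OrthonormalBasis (Fin n) ℝ V)
    (R : V →ₗ[ℝ] V →ₗ[ℝ] (V →ₗ[ℝ] V))
    (hskew : ∀ X Y : V, LinearMap.adjoint (R X Y) = -(R X Y))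
    (hpair : ∀ X Y Z W : V, ⟪R X Y Z, W⟫ = ⟪R Z W X, Y⟫)
    (hbianchi : ∀ X Y Z : V, R X Y Z + R Y Z X + R Z X Y = 0)
    (𝔤 : Submodule ℝ (V →ₗ[ℝ] V))
    (hR𝔤 : ∀ X Y : V, R X Y ∈ 𝔤)
    (I : V →ₗ[ℝ] V)
    (hI2 : I ∘ₗ I = -LinearMap.id)
    (hIskew : LinearMap.adjoint I = -I)
    (hIcomm : ∀ g ∈ 𝔤, I ∘ₗ g = g ∘ₗ I)
    (X Y : V) :
    ((LinearMap.trace ℝ V (R X (I Y)) : ℝ) : ℂ)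
        - Complex.I * ((LinearMap.trace ℝ V (I ∘ₗ R X (I Y)) : ℝ) : ℂ)
      = -2 * Complex.I * ((∑ j, ⟪R (e j) Y X, e j⟫ : ℝ) : ℂ) := by
  have hcomm : ∀ X Y : V, I ∘ₗ R X Y = R X Y ∘ₗ I := fun X Y => hIcomm _ (hR𝔤 X Y)
  rw [LinearMap.trace_eq_zero_of_adjoint_eq_neg (hskew X (I Y)),
    trace_complexStructure_comp_curvature hskew hpair hbianchi hI2 hIskew hcomm,
    ← ricci_eq_sum_inner R e]
  push_cast
  ring
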